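/- Let v ∈ S¹, c > 0, and γ : I → ℝ² a C¹ curve with ⟨γ'(t),v⟩ ≥ c for all t ∈ I. Let (Σ_p)_{p≥0} be a filtration of sub-σ-algebras of the Borel σ-algebra on I, β_p := E[γ' | Σ_p] the conditional expectation of γ' given Σ_p with respect to Lebesgue measure on I, and X_p(t) := ⟨β_p(t),v^⊥⟩ / ⟨β_p(t),v⟩. Then for every λ > 0, the Lebesgue measure of the set {t ∈ I : sup_{p≥1} |∑_{q=0}^{2p−1} (−1)^q X_q(t)| > λ} is at most 16·ℒ(I)/(λ² c³), where ℒ(I) is the length of I. -/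

import Mathlib

/-!
With `u = ⟪γ', v⟫ ≥ c`, `w = ⟪γ', v^⊥⟫` and the weighted measure `ν = u · Leb`, Bayes' formula
identifies `X_p = E[w | Σ_p] / E[u | Σ_p]` with the `ν`-conditional expectation of `w / u`, so
`(X_p)` is a `ν`-martingale bounded by `1 / c`. The alternating sums
`M_p = ∑_{q < 2p} (-1)^q X_q` form a `ν`-martingale for `(Σ_{2p})` whose increments
`X_{2p} - X_{2p+1}` are increments of `X`, so orthogonality of martingale increments gives
`E_ν[M_p²] ≤ E_ν[X_{2p}²] ≤ ν(I) / c²`. Doob's `L²` maximal inequality bounds the `ν`-measure of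
`{sup_p |M_p| > λ}` by `ν(I) / (λ² c²)`; finally Lebesgue measure is at most `ν / c` and
`ν(I) ≤ ℒ(I)`.
-/

open MeasureTheory Filter Metric Set Topology RealInnerProductSpace ENNReal NNReal

noncomputable section

/-- The Euclidean plane. -/
abbrev E2 := EuclideanSpace ℝ (Fin 2)

/-- Rotation of a planar vector by `π/2`. -/
def perp (v : E2) : E2 := (WithLp.equiv 2 (Fin 2 → ℝ)).symm ![-(v 1), v 0]

/-- `IsC1Curve a b γ γ'` : `γ` restricted to the compact nondegenerate interval `[a,b]`
is a C¹ curve with (one-sided at endpoints) derivative `γ'`, continuous and of unit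
norm on `[a,b]`. -/
def IsC1Curve (a b : ℝ) (γ γ' : ℝ → E2) : Prop :=
  a < b ∧ ContinuousOn γ' (Set.Icc a b) ∧
    (∀ t ∈ Set.Icc a b, HasDerivWithinAt γ (γ' t) (Set.Icc a b) t) ∧
    (∀ t ∈ Set.Icc a b, ‖γ' t‖ = 1)

namespace MeasureTheory

def Filtration.reindex {Ω ι κ : Type*} {m : MeasurableSpace Ω} [Preorder ι] [Preorder κ]
    (ℱ : Filtration κ m) {φ : ι → κ} (hφ : Monotone φ) : Filtration ι m where
  seq i := ℱ (φ i)
  mono' _ _ hij := ℱ.mono (hφ hij)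
  le' i := ℱ.le (φ i)

namespace Martingale

variable {Ω ι : Type*} [Preorder ι] {m0 : MeasurableSpace Ω} {μ : Measure Ω} [IsFiniteMeasure μ]
  {ℱ : Filtration ι m0} {Y : ι → Ω → ℝ}

theorem integral_mul_eq_of_le (hY : Martingale Y ℱ μ) {i j : ι} (hij : i ≤ j) {g : Ω → ℝ}
    (hg : StronglyMeasurable[ℱ i] g) (hgY : Integrable (g * Y j) μ) :
    ∫ ω, g ω * Y j ω ∂μ = ∫ ω, g ω * Y i ω ∂μ :=
  calc ∫ ω, g ω * Y j ω ∂μ = ∫ ω, μ[g * Y j|ℱ i] ω ∂μ := (integral_condExp (ℱ.le i)).symm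
    _ = ∫ ω, (g * μ[Y j|ℱ i]) ω ∂μ :=
      integral_congr_ae (condExp_mul_of_stronglyMeasurable_left hg hgY (hY.integrable j))
    _ = ∫ ω, g ω * Y i ω ∂μ :=
      integral_congr_ae ((hY.condExp_ae_eq hij).mono fun ω h => by simp [h])

theorem setIntegral_sq_eq_add (hY : Martingale Y ℱ μ) (hY2 : ∀ i, MemLp (Y i) 2 μ) {i j : ι}
    (hij : i ≤ j) {A : Set Ω} (hA : MeasurableSet[ℱ i] A) :
    ∫ ω in A, Y j ω ^ 2 ∂μ = ∫ ω in A, Y i ω ^ 2 ∂μ + ∫ ω in A, (Y j ω - Y i ω) ^ 2 ∂μ := by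
  have hAm : MeasurableSet A := ℱ.le i A hA
  have hYY : ∀ k l, Integrable (fun ω => Y k ω * Y l ω) μ := fun k l =>
    (hY2 k).integrable_mul (hY2 l)
  -- `Y j - Y i` is orthogonal to the `ℱ i`-measurable function `𝟙_A * Y i`
  have cross : ∫ ω in A, Y i ω * Y j ω ∂μ = ∫ ω in A, Y i ω * Y i ω ∂μ := by
    simp_rw [← integral_indicator hAm, indicator_mul_left]
    exact hY.integral_mul_eq_of_le hij ((hY.stronglyMeasurable i).indicator hA)
      (((hY2 i).indicator hAm).integrable_mul (hY2 j))
  have expand : ∀ ω, Y j ω ^ 2 = Y i ω ^ 2 + (Y j ω - Y i ω) ^ 2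
      + 2 * (Y i ω * Y j ω - Y i ω * Y i ω) := fun ω => by ring
  simp_rw [expand]
  have hsq : Integrable (fun ω => Y i ω ^ 2) μ := (hY2 i).integrable_sq
  have hdsq : Integrable (fun ω => (Y j ω - Y i ω) ^ 2) μ := ((hY2 j).sub (hY2 i)).integrable_sq
  have hcross : Integrable (fun ω => Y i ω * Y j ω - Y i ω * Y i ω) μ := (hYY i j).sub (hYY i i)
  rw [integral_add (hsq.fun_add hdsq).restrict (hcross.const_mul 2).restrict,
    integral_const_mul, integral_sub (hYY i j).restrict (hYY i i).restrict, cross, sub_self,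
    mul_zero, add_zero, integral_add hsq.restrict hdsq.restrict]

theorem integral_sq_eq_add (hY : Martingale Y ℱ μ) (hY2 : ∀ i, MemLp (Y i) 2 μ) {i j : ι}
    (hij : i ≤ j) :
    ∫ ω, Y j ω ^ 2 ∂μ = ∫ ω, Y i ω ^ 2 ∂μ + ∫ ω, (Y j ω - Y i ω) ^ 2 ∂μ := by
  simpa using hY.setIntegral_sq_eq_add hY2 hij MeasurableSet.univ

theorem integral_sq_mono (hY : Martingale Y ℱ μ) (hY2 : ∀ i, MemLp (Y i) 2 μ) {i j : ι}
    (hij : i ≤ j) : ∫ ω, Y i ω ^ 2 ∂μ ≤ ∫ ω, Y j ω ^ 2 ∂μ := by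
  rw [hY.integral_sq_eq_add hY2 hij]
  exact le_add_of_nonneg_right (integral_nonneg fun ω => sq_nonneg _)

theorem submartingale_sq (hY : Martingale Y ℱ μ) (hY2 : ∀ i, MemLp (Y i) 2 μ) :
    Submartingale (fun i ω => Y i ω ^ 2) ℱ μ :=
  submartingale_of_setIntegral_le (fun i => (hY.stronglyMeasurable i).pow 2)
    (fun i => (hY2 i).integrable_sq) fun i j hij A hA => by
      rw [hY.setIntegral_sq_eq_add hY2 hij hA]
      exact le_add_of_nonneg_right (integral_nonneg fun ω => sq_nonneg _)

/-- Doob's maximal inequality in `L²`. -/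
theorem measure_exists_lt_abs_le {Y : ℕ → Ω → ℝ} {ℱ : Filtration ℕ m0}
    (hY : Martingale Y ℱ μ) (hY2 : ∀ n, MemLp (Y n) 2 μ) {K : ℝ}
    (hK : ∀ n, ∫ ω, Y n ω ^ 2 ∂μ ≤ K) {lam : ℝ} (hlam : 0 < lam) :
    μ {ω | ∃ n, lam < |Y n ω|} ≤ ENNReal.ofReal (K / lam ^ 2) := by
  set ε : ℝ≥0 := ⟨lam ^ 2, by positivity⟩
  set S : ℕ → Set Ω := fun n =>
    {ω | (ε : ℝ) ≤ (Finset.range (n + 1)).sup' Finset.nonempty_range_add_one fun k => Y k ω ^ 2}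
  have hS_mono : Monotone S := by
    intro n m hnm ω hω
    simp only [S, mem_ofPred_eq] at hω ⊢
    exact le_trans hω (Finset.sup'_mono _ (Finset.range_subset_range.2 (by omega)) _)
  have hS_le : ∀ n, μ (S n) ≤ ENNReal.ofReal (K / lam ^ 2) := by
    intro n
    have hdoob := maximal_ineq (hY.submartingale_sq hY2) (fun n ω => sq_nonneg (Y n ω)) (ε := ε) n
    have hε : (ε : ℝ≥0∞) = ENNReal.ofReal (lam ^ 2) := by
      rw [← ENNReal.ofReal_coe_nnreal]; rfl
    rw [hε] at hdoob
    rw [ENNReal.ofReal_div_of_pos (by positivity), ENNReal.le_div_iff_mul_le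
      (Or.inl (ENNReal.ofReal_pos.2 (by positivity)).ne') (Or.inl ENNReal.ofReal_ne_top), mul_comm]
    refine hdoob.trans (ENNReal.ofReal_le_ofReal ?_)
    exact (setIntegral_le_integral (hY2 n).integrable_sq
      (ae_of_all _ fun ω => sq_nonneg _)).trans (hK n)
  calc μ {ω | ∃ n, lam < |Y n ω|} ≤ μ (⋃ n, S n) := by
        refine measure_mono fun ω ⟨n, hn⟩ => mem_iUnion.2 ⟨n, ?_⟩
        simp only [S, mem_ofPred_eq]
        refine Finset.le_sup'_of_le _ (Finset.self_mem_range_succ n) ?_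
        exact (pow_le_pow_left₀ hlam.le hn.le 2).trans_eq (sq_abs _)
    _ ≤ ENNReal.ofReal (K / lam ^ 2) := by
        rw [hS_mono.measure_iUnion]
        exact iSup_le hS_le

end Martingale

def alternatingSum {Ω : Type*} (Y : ℕ → Ω → ℝ) (p : ℕ) (ω : Ω) : ℝ :=
  ∑ q ∈ Finset.range (2 * p), (-1) ^ q * Y q ω

section alternatingSum

variable {Ω : Type*} {m0 : MeasurableSpace Ω} {μ : Measure Ω}
  {ℱ : Filtration ℕ m0} {Y : ℕ → Ω → ℝ}

@[simp]
lemma alternatingSum_zero : alternatingSum Y 0 = 0 := by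
  ext; simp [alternatingSum]

lemma alternatingSum_succ (p : ℕ) (ω : Ω) :
    alternatingSum Y (p + 1) ω = alternatingSum Y p ω + (Y (2 * p) ω - Y (2 * p + 1) ω) := by
  simp only [alternatingSum, Nat.mul_succ, Finset.sum_range_succ, pow_succ, pow_mul]
  ring

lemma memLp_alternatingSum {p : ℝ≥0∞} (hY : ∀ n, MemLp (Y n) p μ) (n : ℕ) :
    MemLp (alternatingSum Y n) p μ :=
  memLp_finsetSum _ fun q _ => (hY q).const_mul _

theorem martingale_alternatingSum [IsFiniteMeasure μ] (hY : Martingale Y ℱ μ) :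
    Martingale (alternatingSum Y) (ℱ.reindex (fun _ _ h => Nat.mul_le_mul_left 2 h)) μ := by
  have hint : ∀ p, Integrable (alternatingSum Y p) μ := fun p =>
    integrable_finsetSum _ fun q _ => (hY.integrable q).const_mul _
  refine martingale_of_setIntegral_eq_succ (fun p => ?_) hint fun p A hA => ?_
  · exact Finset.stronglyMeasurable_fun_sum _ fun q hq => stronglyMeasurable_const.mul
      ((hY.stronglyMeasurable q).mono (ℱ.mono (Finset.mem_range.1 hq).le))
  · have hAm : MeasurableSet[ℱ (2 * p)] A := hA
    simp_rw [alternatingSum_succ]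
    rw [integral_add (hint p).restrict ((hY.integrable _).sub' (hY.integrable _)).restrict,
      integral_sub (hY.integrable _).restrict (hY.integrable _).restrict,
      hY.setIntegral_eq (Nat.le_succ _) hAm, sub_self, add_zero]

theorem Martingale.integral_alternatingSum_sq_le [IsFiniteMeasure μ] (hY : Martingale Y ℱ μ)
    (hY2 : ∀ n, MemLp (Y n) 2 μ) (p : ℕ) :
    ∫ ω, alternatingSum Y p ω ^ 2 ∂μ ≤ ∫ ω, Y (2 * p) ω ^ 2 ∂μ := by
  induction p with
  | zero =>
    simp only [alternatingSum_zero, Pi.zero_apply]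
    simpa using integral_nonneg fun ω => sq_nonneg (Y 0 ω)
  | succ p ih =>
    have hstep := (martingale_alternatingSum hY).integral_sq_eq_add
      (memLp_alternatingSum hY2) p.le_succ
    have hincr := hY.integral_sq_eq_add hY2 (2 * p).le_succ
    have hmono := hY.integral_sq_mono hY2 (show 2 * p + 1 ≤ 2 * (p + 1) by omega)
    have hsame : ∀ ω, (alternatingSum Y (p + 1) ω - alternatingSum Y p ω) ^ 2
        = (Y (2 * p + 1) ω - Y (2 * p) ω) ^ 2 := fun ω => by rw [alternatingSum_succ]; ring
    simp only [hsame] at hstep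
    linarith

end alternatingSum

section BayesFormula

variable {Ω : Type*} {m m0 : MeasurableSpace Ω} {μ : Measure Ω}

lemma ae_le_condExp_of_ae_le [IsFiniteMeasure μ] (hm : m ≤ m0) {c : ℝ} {u : Ω → ℝ}
    (hu : Integrable u μ) (hcu : ∀ᵐ ω ∂μ, c ≤ u ω) : ∀ᵐ ω ∂μ, c ≤ μ[u|m] ω := by
  have h := condExp_mono (m := m) (integrable_const c) hu hcu
  rwa [condExp_const hm] at h

lemma setIntegral_mul_eq_setIntegral_condExp_mul (hm : m ≤ m0) [SigmaFinite (μ.trim hm)]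
    {u g : Ω → ℝ} (hu : Integrable u μ) (hg : StronglyMeasurable[m] g) (hug : Integrable (u * g) μ)
    {A : Set Ω} (hA : MeasurableSet[m] A) :
    ∫ ω in A, u ω * g ω ∂μ = ∫ ω in A, μ[u|m] ω * g ω ∂μ :=
  calc ∫ ω in A, u ω * g ω ∂μ = ∫ ω in A, μ[u * g|m] ω ∂μ := (setIntegral_condExp hm hug hA).symm
    _ = ∫ ω in A, μ[u|m] ω * g ω ∂μ :=
      integral_congr_ae (ae_restrict_of_ae (condExp_mul_of_stronglyMeasurable_right hg hug hu))

lemma ofReal_mul_le_withDensity_ofReal {c : ℝ} {u : Ω → ℝ} (hcu : ∀ᵐ ω ∂μ, c ≤ u ω)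
    (S : Set Ω) : ENNReal.ofReal c * μ S ≤ μ.withDensity (fun ω => ENNReal.ofReal (u ω)) S := by
  have h := withDensity_mono (μ := μ) (f := fun _ => ENNReal.ofReal c)
    (hcu.mono fun ω hω => ENNReal.ofReal_le_ofReal hω)
  simpa [withDensity_const] using Measure.le_iff'.1 h S

lemma measureReal_univ_withDensity_ofReal {u : Ω → ℝ} (hu : Integrable u μ)
    (hu0 : 0 ≤ᵐ[μ] u) :
    (μ.withDensity fun ω => ENNReal.ofReal (u ω)).real univ = ∫ ω, u ω ∂μ := by
  rw [measureReal_def, withDensity_apply _ MeasurableSet.univ, Measure.restrict_univ,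
    ← ofReal_integral_eq_lintegral_ofReal hu hu0, ENNReal.toReal_ofReal (integral_nonneg_of_ae hu0)]

variable [IsFiniteMeasure μ] {u w : Ω → ℝ} {U W : Ω → ℝ} {c C : ℝ}

lemma ae_abs_div_le (hm : m ≤ m0) (hc : 0 < c) (hu : Integrable u μ) (hcu : ∀ᵐ ω ∂μ, c ≤ u ω)
    (hwC : ∀ᵐ ω ∂μ, |w ω| ≤ C) (hUu : U =ᵐ[μ] μ[u|m]) (hWw : W =ᵐ[μ] μ[w|m]) :
    ∀ᵐ ω ∂μ, |W ω / U ω| ≤ C / c := by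
  filter_upwards [ae_le_condExp_of_ae_le hm hu hcu, ae_bdd_abs_condExp_of_ae_bdd_abs (m := m) hwC,
    hUu, hWw] with ω hcU hWC hU hW
  rw [hU, hW, abs_div, abs_of_pos (hc.trans_le hcU)]
  exact div_le_div₀ ((abs_nonneg _).trans hWC) hWC hc hcU

/-- Bayes' formula: `W / U` is the conditional expectation of `w / u` under the measure
with density `u`. -/
lemma setIntegral_div_withDensity (hm : m ≤ m0) (hc : 0 < c) (hu : Integrable u μ)
    (hcu : ∀ᵐ ω ∂μ, c ≤ u ω) (hw : Integrable w μ) (hwC : ∀ᵐ ω ∂μ, |w ω| ≤ C)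
    (hU : StronglyMeasurable[m] U) (hUu : U =ᵐ[μ] μ[u|m])
    (hW : StronglyMeasurable[m] W) (hWw : W =ᵐ[μ] μ[w|m]) {A : Set Ω} (hA : MeasurableSet[m] A) :
    ∫ ω in A, W ω / U ω ∂μ.withDensity (fun ω => ENNReal.ofReal (u ω)) = ∫ ω in A, w ω ∂μ := by
  have hX : StronglyMeasurable[m] (fun ω => W ω / U ω) :=
    (hW.measurable.div hU.measurable).stronglyMeasurable
  have huX : Integrable (u * fun ω => W ω / U ω) μ :=
    hu.mul_bdd (hX.mono hm).aestronglyMeasurable (ae_abs_div_le hm hc hu hcu hwC hUu hWw)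
  calc ∫ ω in A, W ω / U ω ∂μ.withDensity (fun ω => ENNReal.ofReal (u ω))
      = ∫ ω in A, u ω * (W ω / U ω) ∂μ := by
        rw [setIntegral_withDensity_eq_setIntegral_toReal_smul₀' A
          hu.aemeasurable.ennreal_ofReal.restrict (ae_of_all _ fun _ => ENNReal.ofReal_lt_top)]
        refine integral_congr_ae (ae_restrict_of_ae (hcu.mono fun ω hω => ?_))
        simp only [ENNReal.toReal_ofReal (hc.le.trans hω), smul_eq_mul]
    _ = ∫ ω in A, μ[u|m] ω * (W ω / U ω) ∂μ :=
        setIntegral_mul_eq_setIntegral_condExp_mul hm hu hX huX hA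
    _ = ∫ ω in A, μ[w|m] ω ∂μ := by
        refine integral_congr_ae (ae_restrict_of_ae ?_)
        filter_upwards [ae_le_condExp_of_ae_le hm hu hcu, hUu, hWw] with ω hcU hU hW
        rw [← hU, ← hW, mul_div_cancel₀ _ (hc.trans_le (hU ▸ hcU)).ne']
    _ = ∫ ω in A, w ω ∂μ := setIntegral_condExp hm hw hA

end BayesFormula

section RatioMartingale

variable {Ω : Type*} {m0 : MeasurableSpace Ω} {μ : Measure Ω} [IsFiniteMeasure μ] {u w : Ω → ℝ}
  {c C : ℝ} {ℱ : Filtration ℕ m0} {U W : ℕ → Ω → ℝ}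

lemma memLp_div_withDensity (hc : 0 < c) (hu : Integrable u μ) (hcu : ∀ᵐ ω ∂μ, c ≤ u ω)
    (hwC : ∀ᵐ ω ∂μ, |w ω| ≤ C) (hU : ∀ r, StronglyMeasurable[ℱ r] (U r))
    (hUu : ∀ r, U r =ᵐ[μ] μ[u|ℱ r]) (hW : ∀ r, StronglyMeasurable[ℱ r] (W r))
    (hWw : ∀ r, W r =ᵐ[μ] μ[w|ℱ r]) (p : ℝ≥0∞) (r : ℕ) :
    MemLp (fun ω => W r ω / U r ω) p (μ.withDensity fun ω => ENNReal.ofReal (u ω)) :=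
  have := isFiniteMeasure_withDensity_ofReal hu.2
  MemLp.of_bound
    (((hW r).measurable.div (hU r).measurable).mono (ℱ.le r) le_rfl).aestronglyMeasurable (C / c) <|
      (withDensity_absolutelyContinuous _ _).ae_le <|
        ae_abs_div_le (ℱ.le r) hc hu hcu hwC (hUu r) (hWw r)

theorem martingale_div_withDensity (hc : 0 < c) (hu : Integrable u μ)
    (hcu : ∀ᵐ ω ∂μ, c ≤ u ω) (hw : Integrable w μ) (hwC : ∀ᵐ ω ∂μ, |w ω| ≤ C)
    (hU : ∀ r, StronglyMeasurable[ℱ r] (U r)) (hUu : ∀ r, U r =ᵐ[μ] μ[u|ℱ r])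
    (hW : ∀ r, StronglyMeasurable[ℱ r] (W r)) (hWw : ∀ r, W r =ᵐ[μ] μ[w|ℱ r]) :
    Martingale (fun r ω => W r ω / U r ω) ℱ (μ.withDensity fun ω => ENNReal.ofReal (u ω)) :=
  have := isFiniteMeasure_withDensity_ofReal hu.2
  martingale_of_setIntegral_eq_succ
    (fun r => ((hW r).measurable.div (hU r).measurable).stronglyMeasurable)
    (fun r => memLp_one_iff_integrable.1 (memLp_div_withDensity hc hu hcu hwC hU hUu hW hWw 1 r))
    fun r A hA => by
      rw [setIntegral_div_withDensity (ℱ.le r) hc hu hcu hw hwC (hU r) (hUu r) (hW r) (hWw r) hA,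
        setIntegral_div_withDensity (ℱ.le (r + 1)) hc hu hcu hw hwC (hU _) (hUu _) (hW _) (hWw _)
          (ℱ.mono r.le_succ A hA)]

theorem measure_exists_lt_abs_alternatingSum_div_le (hc : 0 < c) (hu : Integrable u μ)
    (hcu : ∀ᵐ ω ∂μ, c ≤ u ω) (hw : Integrable w μ) (hwC : ∀ᵐ ω ∂μ, |w ω| ≤ C)
    (hU : ∀ r, StronglyMeasurable[ℱ r] (U r)) (hUu : ∀ r, U r =ᵐ[μ] μ[u|ℱ r])
    (hW : ∀ r, StronglyMeasurable[ℱ r] (W r)) (hWw : ∀ r, W r =ᵐ[μ] μ[w|ℱ r])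
    {lam : ℝ} (hlam : 0 < lam) :
    μ {ω | ∃ p, lam < |alternatingSum (fun r ω => W r ω / U r ω) p ω|}
      ≤ ENNReal.ofReal (C ^ 2 * (∫ ω, u ω ∂μ) / (lam ^ 2 * c ^ 3)) := by
  set ν := μ.withDensity fun ω => ENNReal.ofReal (u ω)
  have : IsFiniteMeasure ν := isFiniteMeasure_withDensity_ofReal hu.2
  set X : ℕ → Ω → ℝ := fun r ω => W r ω / U r ω
  have hX : Martingale X ℱ ν := martingale_div_withDensity hc hu hcu hw hwC hU hUu hW hWw
  have hX2 : ∀ r, MemLp (X r) 2 ν := memLp_div_withDensity hc hu hcu hwC hU hUu hW hWw 2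
  have hXsq : ∀ r, ∫ ω, X r ω ^ 2 ∂ν ≤ (C / c) ^ 2 * ∫ ω, u ω ∂μ := fun r => by
    have hbound : ∀ᵐ ω ∂ν, |X r ω| ≤ C / c := (withDensity_absolutelyContinuous μ _).ae_le <|
      ae_abs_div_le (ℱ.le r) hc hu hcu hwC (hUu r) (hWw r)
    calc ∫ ω, X r ω ^ 2 ∂ν ≤ ∫ _, (C / c) ^ 2 ∂ν :=
          integral_mono_ae (hX2 r).integrable_sq (integrable_const _) <| hbound.mono
            fun ω hω => sq_le_sq' (abs_le.1 hω).1 (abs_le.1 hω).2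
      _ = (C / c) ^ 2 * ∫ ω, u ω ∂μ := by
          rw [integral_const, smul_eq_mul, measureReal_univ_withDensity_ofReal hu
            (hcu.mono fun ω hω => hc.le.trans hω), mul_comm]
  have hν := (martingale_alternatingSum hX).measure_exists_lt_abs_le
    (memLp_alternatingSum hX2) (fun p => (hX.integral_alternatingSum_sq_le hX2 p).trans (hXsq _))
    hlam
  have hμν := ofReal_mul_le_withDensity_ofReal hcu
    {ω | ∃ p, lam < |alternatingSum X p ω|}
  rw [mul_comm, ← ENNReal.le_div_iff_mul_le (Or.inl (ENNReal.ofReal_pos.2 hc).ne')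
    (Or.inl ENNReal.ofReal_ne_top)] at hμν
  refine hμν.trans ((ENNReal.div_le_div_right hν _).trans_eq ?_)
  rw [← ENNReal.ofReal_div_of_pos hc]
  congr 1
  field_simp

end RatioMartingale

end MeasureTheory

lemma inner_condExp_ae_eq {Ω E : Type*} {m m0 : MeasurableSpace Ω} {μ : Measure Ω}
    [NormedAddCommGroup E] [InnerProductSpace ℝ E] [CompleteSpace E] {f : Ω → E}
    (hf : Integrable f μ) (x : E) :
    (fun ω => ⟪μ[f|m] ω, x⟫) =ᵐ[μ] μ[fun ω => ⟪f ω, x⟫|m] := by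
  simpa [Function.comp_def, real_inner_comm x] using (innerSL ℝ x).comp_condExp_comm (m := m) hf

theorem measure_exists_lt_abs_alternatingSum_inner_div_le {Ω E : Type*} {m0 : MeasurableSpace Ω}
    {μ : Measure Ω} [IsFiniteMeasure μ] [NormedAddCommGroup E] [InnerProductSpace ℝ E]
    [CompleteSpace E] {ℱ : Filtration ℕ m0} {f : Ω → E} (hf : Integrable f μ)
    (hf1 : ∀ᵐ ω ∂μ, ‖f ω‖ ≤ 1) {v e : E} (hv : ‖v‖ ≤ 1) (he : ‖e‖ ≤ 1) {c : ℝ} (hc : 0 < c)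
    (hcv : ∀ᵐ ω ∂μ, c ≤ ⟪f ω, v⟫) {lam : ℝ} (hlam : 0 < lam) :
    μ {ω | ∃ p, lam < |alternatingSum (fun r ω => ⟪μ[f|ℱ r] ω, e⟫ / ⟪μ[f|ℱ r] ω, v⟫) p ω|}
      ≤ ENNReal.ofReal (μ.real univ / (lam ^ 2 * c ^ 3)) := by
  have hinner_le : ∀ x : E, ‖x‖ ≤ 1 → ∀ᵐ ω ∂μ, |⟪f ω, x⟫| ≤ 1 := fun x hx =>
    hf1.mono fun ω hω => (abs_real_inner_le_norm _ _).trans (mul_le_one₀ hω (norm_nonneg _) hx)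
  have hu_le : ∫ ω, ⟪f ω, v⟫ ∂μ ≤ μ.real univ := by
    simpa using integral_mono_ae (hf.inner_const v) (integrable_const 1)
      ((hinner_le v hv).mono fun ω hω => (abs_le.1 hω).2)
  refine (measure_exists_lt_abs_alternatingSum_div_le hc (hf.inner_const v) hcv
    (hf.inner_const e) (hinner_le e he)
    (fun r => stronglyMeasurable_condExp.inner stronglyMeasurable_const)
    (fun r => inner_condExp_ae_eq hf v)
    (fun r => stronglyMeasurable_condExp.inner stronglyMeasurable_const)
    (fun r => inner_condExp_ae_eq hf e) hlam).trans ?_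
  exact ENNReal.ofReal_le_ofReal (div_le_div_of_nonneg_right (by simpa using hu_le) (by positivity))

lemma norm_perp (v : E2) : ‖perp v‖ = ‖v‖ := by
  simp [EuclideanSpace.norm_eq, perp, Fin.sum_univ_two, add_comm]

/-- With `γ`, `(Σ_p)`, `β_p`, `X_p` as in the martingale proposition,
for every `λ > 0` the Lebesgue measure of
`{t ∈ I : sup_{p ≥ 1} |∑_{q=0}^{2p−1} (−1)^q X_q(t)| > λ}` is at most
`16 ℒ(I)/(λ² c³)`. -/
theorem stmt16 (v : E2) (hv : v ∈ sphere (0:E2) 1) (c : ℝ) (hc : 0 < c)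
    (a b : ℝ) (γ γ' : ℝ → E2) (hγ : IsC1Curve a b γ γ')
    (hdir : ∀ t ∈ Set.Icc a b, c ≤ ⟪γ' t, v⟫)
    (ℱ : Filtration ℕ (Real.measurableSpace))
    (β : ℕ → ℝ → E2) (hβ : ∀ p, β p = (volume.restrict (Set.Icc a b))[γ'|ℱ p])
    (X : ℕ → ℝ → ℝ) (hX : ∀ p t, X p t = ⟪β p t, perp v⟫ / ⟪β p t, v⟫)
    (lam : ℝ) (hlam : 0 < lam) :
    volume {t ∈ Set.Icc a b | ∃ p : ℕ, 1 ≤ p ∧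
        lam < |∑ q ∈ Finset.range (2 * p), (-1 : ℝ) ^ q * X q t|}
      ≤ ENNReal.ofReal (16 * (b - a) / (lam ^ 2 * c ^ 3)) := by
  obtain ⟨hab, hγ'_cont, -, hγ'_norm⟩ := hγ
  set μ := volume.restrict (Icc a b)
  have hv1 : ‖v‖ = 1 := by simpa using hv
  have hγ'_le : ∀ᵐ t ∂μ, ‖γ' t‖ ≤ 1 :=
    (ae_restrict_mem measurableSet_Icc).mono fun t ht => (hγ'_norm t ht).le
  have hγ'_int : Integrable γ' μ :=
    .of_bound (hγ'_cont.aestronglyMeasurable measurableSet_Icc) 1 hγ'_le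
  have hX_eq : (fun r t => ⟪μ[γ'|ℱ r] t, perp v⟫ / ⟪μ[γ'|ℱ r] t, v⟫) = X := by
    ext r t; rw [hX, hβ]
  calc volume {t ∈ Icc a b | ∃ p : ℕ, 1 ≤ p ∧
          lam < |∑ q ∈ Finset.range (2 * p), (-1 : ℝ) ^ q * X q t|}
      ≤ μ {t | ∃ p, lam < |alternatingSum X p t|} := by
        rw [Measure.restrict_apply' measurableSet_Icc]
        exact measure_mono fun t ⟨ht, p, _, hp⟩ => ⟨⟨p, hp⟩, ht⟩
    _ ≤ ENNReal.ofReal (μ.real univ / (lam ^ 2 * c ^ 3)) :=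
        hX_eq ▸ measure_exists_lt_abs_alternatingSum_inner_div_le hγ'_int hγ'_le hv1.le
          (by rw [norm_perp, hv1]) hc ((ae_restrict_mem measurableSet_Icc).mono hdir) hlam
    _ ≤ ENNReal.ofReal (16 * (b - a) / (lam ^ 2 * c ^ 3)) := by
        refine ENNReal.ofReal_le_ofReal (div_le_div_of_nonneg_right ?_ (by positivity))
        simp only [μ, measureReal_restrict_apply_univ, Real.volume_real_Icc_of_le hab.le]
        linarith

end
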